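/- In the constrained Lasso setup, suppose ‖γ̂ − Γ̂β*‖_∞ ≤ λ/4, suppose Γ̂ satisfies the Lower-RE condition with curvature α > 0 and tolerance τ > 0, and suppose λ ≥ 4 b₁ τ. Then the error vector υ = β̂ − β* satisfies the cone constraint ‖υ_{S^c}‖₁ ≤ 3 ‖υ_S‖₁, and consequently ‖υ‖₁ ≤ 4 ‖υ_S‖₁ ≤ 4 √d₀ ‖υ‖₂. -/

import Mathlib

open MeasureTheory Matrix Finset

/-- Euclidean (ℓ₂) norm of a vector. -/
noncomputable def e2 {ι : Type*} [Fintype ι] (v : ι → ℝ) : ℝ :=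
  Real.sqrt (∑ i, v i ^ 2)

/-- ℓ₁ norm of a vector. -/
noncomputable def l1 {ι : Type*} [Fintype ι] (v : ι → ℝ) : ℝ := ∑ i, |v i|

/-- The constrained Lasso objective `(1/2)βᵀΓ̂β − ⟨γ̂, β⟩ + λ‖β‖₁`. -/
noncomputable def lassoObj {p : ℕ} (Γ : Matrix (Fin p) (Fin p) ℝ)
    (γ : Fin p → ℝ) (lam : ℝ) (β : Fin p → ℝ) : ℝ :=
  (1 / 2 : ℝ) * (β ⬝ᵥ Γ.mulVec β) - γ ⬝ᵥ β + lam * l1 β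

/-- The Lower-RE condition with curvature `α` and tolerance `τ`. -/
def LowerRE {p : ℕ} (Γ : Matrix (Fin p) (Fin p) ℝ) (α τ : ℝ) : Prop :=
  ∀ θ : Fin p → ℝ, α * e2 θ ^ 2 - τ * l1 θ ^ 2 ≤ θ ⬝ᵥ Γ.mulVec θ

/-!
Comparing the objective at `β̂` with its value at the feasible point `β*`, and writing
`υ = β̂ - β*`, symmetry of `Γ̂` gives
`λ (‖β̂‖₁ - ‖β*‖₁) ≤ ⟨γ̂ - Γ̂β*, υ⟩ - ½ υᵀΓ̂υ ≤ (λ/4) ‖υ‖₁ + (τ/2) ‖υ‖₁²`.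
Since `‖υ‖₁ ≤ 2b₁` and `4b₁τ ≤ λ`, the right-hand side is at most `(λ/2) ‖υ‖₁`. As `β*` vanishes
off `S`, `‖β̂‖₁ - ‖β*‖₁ ≥ ‖υ_{Sᶜ}‖₁ - ‖υ_S‖₁`, and together with `‖υ‖₁ = ‖υ_S‖₁ + ‖υ_{Sᶜ}‖₁`
this is the cone constraint. The last bound is Cauchy–Schwarz on `S`.
-/

section Norms

variable {ι : Type*} [Fintype ι]

lemma l1_nonneg (v : ι → ℝ) : 0 ≤ l1 v :=
  sum_nonneg fun i _ => abs_nonneg (v i)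

lemma l1_sub_le (x y : ι → ℝ) : l1 (x - y) ≤ l1 x + l1 y := by
  rw [l1, l1, l1, ← sum_add_distrib]
  exact sum_le_sum fun i _ => abs_sub (x i) (y i)

lemma l1_eq_sum_add_sum_compl [DecidableEq ι] (s : Finset ι) (v : ι → ℝ) :
    l1 v = ∑ i ∈ s, |v i| + ∑ i ∈ sᶜ, |v i| :=
  (sum_add_sum_compl s _).symm

lemma sum_abs_le_sqrt_card_mul_e2 (s : Finset ι) (v : ι → ℝ) :
    ∑ i ∈ s, |v i| ≤ √(#s : ℝ) * e2 v := by
  rw [e2, ← Real.sqrt_mul (Nat.cast_nonneg _)]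
  apply Real.le_sqrt_of_sq_le
  calc (∑ i ∈ s, |v i|) ^ 2 ≤ (#s : ℝ) * ∑ i ∈ s, |v i| ^ 2 := sq_sum_le_card_mul_sum_sq
    _ ≤ (#s : ℝ) * ∑ i, v i ^ 2 := by
      simp only [sq_abs]
      gcongr
      exact subset_univ s

lemma abs_dotProduct_le_mul_l1 {u : ι → ℝ} {c : ℝ} (hu : ∀ i, |u i| ≤ c) (v : ι → ℝ) :
    |u ⬝ᵥ v| ≤ c * l1 v :=
  calc |u ⬝ᵥ v| ≤ ∑ i, |u i * v i| := abs_sum_le_sum_abs _ _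
    _ ≤ ∑ i, c * |v i| := sum_le_sum fun i _ => by
      rw [abs_mul]
      exact mul_le_mul_of_nonneg_right (hu i) (abs_nonneg _)
    _ = c * l1 v := (mul_sum _ _ _).symm

lemma sum_compl_sub_sum_le_l1_sub_l1 [DecidableEq ι] {s : Finset ι} {x : ι → ℝ}
    (hx : ∀ i ∉ s, x i = 0) (y : ι → ℝ) :
    ∑ i ∈ sᶜ, |y i - x i| - ∑ i ∈ s, |y i - x i| ≤ l1 y - l1 x := by
  have h_off : ∑ i ∈ sᶜ, |y i - x i| = ∑ i ∈ sᶜ, |y i| :=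
    sum_congr rfl fun i hi => by rw [hx i (mem_compl.mp hi), sub_zero]
  have hx_off : ∑ i ∈ sᶜ, |x i| = 0 :=
    sum_eq_zero fun i hi => by rw [hx i (mem_compl.mp hi), abs_zero]
  have h_on : ∑ i ∈ s, |x i| - ∑ i ∈ s, |y i - x i| ≤ ∑ i ∈ s, |y i| := by
    rw [← sum_sub_distrib]
    refine sum_le_sum fun i _ => ?_
    linarith [abs_sub_abs_le_abs_sub (x i) (y i), abs_sub_comm (x i) (y i)]
  rw [l1_eq_sum_add_sum_compl s y, l1_eq_sum_add_sum_compl s x]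
  linarith

lemma sum_compl_le_three_mul_sum [DecidableEq ι] {s : Finset ι} {x y : ι → ℝ}
    (hx : ∀ i ∉ s, x i = 0) (hxy : l1 y ≤ l1 x + 1 / 2 * l1 (y - x)) :
    ∑ i ∈ sᶜ, |y i - x i| ≤ 3 * ∑ i ∈ s, |y i - x i| := by
  have hsplit := l1_eq_sum_add_sum_compl s (y - x)
  have hdecomp := sum_compl_sub_sum_le_l1_sub_l1 hx y
  simp only [Pi.sub_apply] at hsplit
  linarith

end Norms

lemma Matrix.IsSymm.dotProduct_mulVec_sub {ι R : Type*} [Fintype ι] [CommRing R]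
    {Γ : Matrix ι ι R} (hΓ : Γ.IsSymm) (x y : ι → R) :
    y ⬝ᵥ Γ *ᵥ y - x ⬝ᵥ Γ *ᵥ x = (y - x) ⬝ᵥ Γ *ᵥ (y - x) + 2 * ((Γ *ᵥ x) ⬝ᵥ (y - x)) := by
  have hcomm : x ⬝ᵥ Γ *ᵥ (y - x) = (Γ *ᵥ x) ⬝ᵥ (y - x) := by
    rw [dotProduct_mulVec, ← mulVec_transpose, hΓ.eq]
  obtain ⟨d, rfl⟩ : ∃ d, y = d + x := ⟨y - x, (sub_add_cancel y x).symm⟩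
  simp only [add_sub_cancel_right] at hcomm ⊢
  rw [mulVec_add, dotProduct_add, add_dotProduct, add_dotProduct, hcomm,
    dotProduct_comm d (Γ *ᵥ x)]
  ring

lemma LowerRE.neg_mul_l1_sq_le {p : ℕ} {Γ : Matrix (Fin p) (Fin p) ℝ} {α τ : ℝ}
    (hRE : LowerRE Γ α τ) (hα : 0 ≤ α) (θ : Fin p → ℝ) :
    -(τ * l1 θ ^ 2) ≤ θ ⬝ᵥ Γ *ᵥ θ := by
  have := hRE θ
  have : 0 ≤ α * e2 θ ^ 2 := by positivity
  linarith

lemma lassoObj_sub_lassoObj {p : ℕ} {Γ : Matrix (Fin p) (Fin p) ℝ} (hΓ : Γ.IsSymm)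
    (γ : Fin p → ℝ) (lam : ℝ) (x y : Fin p → ℝ) :
    lassoObj Γ γ lam y - lassoObj Γ γ lam x =
      1 / 2 * ((y - x) ⬝ᵥ Γ *ᵥ (y - x)) - (γ - Γ *ᵥ x) ⬝ᵥ (y - x)
        + lam * (l1 y - l1 x) := by
  have hquad := hΓ.dotProduct_mulVec_sub x y
  simp only [lassoObj, sub_dotProduct, dotProduct_sub] at hquad ⊢
  linarith

lemma lasso_l1_le_add_half_l1_sub {p : ℕ} {Γ : Matrix (Fin p) (Fin p) ℝ} (hΓ : Γ.IsSymm)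
    {γ : Fin p → ℝ} {lam b₁ α τ : ℝ} (hlam : 0 < lam) {βstar βhat : Fin p → ℝ}
    (hβstar : l1 βstar ≤ b₁) (hβhat : l1 βhat ≤ b₁)
    (hmin : ∀ β : Fin p → ℝ, l1 β ≤ b₁ → lassoObj Γ γ lam βhat ≤ lassoObj Γ γ lam β)
    (horacle : ∀ i, |γ i - (Γ *ᵥ βstar) i| ≤ lam / 4)
    (hα : 0 ≤ α) (hτ : 0 ≤ τ) (hRE : LowerRE Γ α τ) (hlamtau : 4 * b₁ * τ ≤ lam) :
    l1 βhat ≤ l1 βstar + 1 / 2 * l1 (βhat - βstar) := by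
  set L := l1 (βhat - βstar)
  have hobj := lassoObj_sub_lassoObj hΓ γ lam βstar βhat
  have hquad := hRE.neg_mul_l1_sq_le hα (βhat - βstar)
  have hcross : (γ - Γ *ᵥ βstar) ⬝ᵥ (βhat - βstar) ≤ lam / 4 * L :=
    (le_abs_self _).trans (abs_dotProduct_le_mul_l1 horacle _)
  have hcurv : τ * L ^ 2 ≤ lam / 2 * L := by
    have hL : L ≤ 2 * b₁ := by linarith [l1_sub_le βhat βstar]
    have hτL : τ * L ≤ lam / 2 :=
      calc τ * L ≤ τ * (2 * b₁) := mul_le_mul_of_nonneg_left hL hτ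
        _ ≤ lam / 2 := by linarith
    rw [sq, ← mul_assoc]
    exact mul_le_mul_of_nonneg_right hτL (l1_nonneg _)
  have hbasic : lam * (l1 βhat - l1 βstar) ≤ lam * (1 / 2 * L) := by
    linarith [hmin βstar hβstar]
  linarith [le_of_mul_le_mul_left hbasic hlam]

theorem lasso_cone_constraint_general
    (p : ℕ) (Γ : Matrix (Fin p) (Fin p) ℝ) (hΓ : Γ.IsSymm)
    (γ : Fin p → ℝ) (lam b₁ : ℝ) (hlam : 0 < lam)
    (βstar : Fin p → ℝ) (hβstar : l1 βstar ≤ b₁)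
    (S : Finset (Fin p)) (hS : ∀ i, i ∈ S ↔ βstar i ≠ 0)
    (d₀ : ℕ) (hd₀ : S.card ≤ d₀)
    (βhat : Fin p → ℝ) (hβhat : l1 βhat ≤ b₁)
    (hmin : ∀ β : Fin p → ℝ, l1 β ≤ b₁ → lassoObj Γ γ lam βhat ≤ lassoObj Γ γ lam β)
    (horacle : ∀ i, |γ i - Γ.mulVec βstar i| ≤ lam / 4)
    (α τ : ℝ) (hα : 0 < α) (hτ : 0 < τ)
    (hRE : LowerRE Γ α τ)
    (hlamtau : 4 * b₁ * τ ≤ lam) :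
    (∑ i ∈ Sᶜ, |βhat i - βstar i|) ≤ 3 * ∑ i ∈ S, |βhat i - βstar i| ∧
    l1 (βhat - βstar) ≤ 4 * ∑ i ∈ S, |βhat i - βstar i| ∧
    4 * (∑ i ∈ S, |βhat i - βstar i|) ≤ 4 * Real.sqrt d₀ * e2 (βhat - βstar) := by
  have hβstar_off : ∀ i ∉ S, βstar i = 0 := fun i hi => not_not.mp (mt (hS i).mpr hi)
  have hcone := sum_compl_le_three_mul_sum hβstar_off <|
    lasso_l1_le_add_half_l1_sub hΓ hlam hβstar hβhat hmin horacle hα.le hτ.le hRE hlamtau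
  have hsplit := l1_eq_sum_add_sum_compl S (βhat - βstar)
  have hcs : ∑ i ∈ S, |βhat i - βstar i| ≤ √(d₀ : ℝ) * e2 (βhat - βstar) :=
    calc ∑ i ∈ S, |βhat i - βstar i| ≤ √(#S : ℝ) * e2 (βhat - βstar) :=
          sum_abs_le_sqrt_card_mul_e2 S (βhat - βstar)
      _ ≤ √(d₀ : ℝ) * e2 (βhat - βstar) := by
          gcongr
          exact Real.sqrt_nonneg _
  refine ⟨hcone, ?_, ?_⟩
  · simp only [Pi.sub_apply] at hsplit
    linarith
  · linarith

/-- Lemma: cone constraint for the constrained Lasso error vector. -/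
theorem lasso_cone_constraint
    (p : ℕ) (Γ : Matrix (Fin p) (Fin p) ℝ) (hΓ : Γ.IsSymm)
    (γ : Fin p → ℝ) (lam b₁ : ℝ) (hlam : 0 < lam) (hb₁ : 0 < b₁)
    (βstar : Fin p → ℝ) (hβstar : l1 βstar ≤ b₁)
    (S : Finset (Fin p)) (hS : ∀ i, i ∈ S ↔ βstar i ≠ 0)
    (d₀ : ℕ) (hd₀ : S.card ≤ d₀)
    (βhat : Fin p → ℝ) (hβhat : l1 βhat ≤ b₁)
    (hmin : ∀ β : Fin p → ℝ, l1 β ≤ b₁ → lassoObj Γ γ lam βhat ≤ lassoObj Γ γ lam β)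
    (horacle : ∀ i, |γ i - Γ.mulVec βstar i| ≤ lam / 4)
    (α τ : ℝ) (hα : 0 < α) (hτ : 0 < τ)
    (hRE : LowerRE Γ α τ)
    (hlamtau : 4 * b₁ * τ ≤ lam) :
    (∑ i ∈ Sᶜ, |βhat i - βstar i|) ≤ 3 * ∑ i ∈ S, |βhat i - βstar i| ∧
    l1 (βhat - βstar) ≤ 4 * ∑ i ∈ S, |βhat i - βstar i| ∧
    4 * (∑ i ∈ S, |βhat i - βstar i|) ≤ 4 * Real.sqrt d₀ * e2 (βhat - βstar) :=
  lasso_cone_constraint_general p Γ hΓ γ lam b₁ hlam βstar hβstar S hS d₀ hd₀ βhat hβhat hmin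
    horacle α τ hα hτ hRE hlamtau
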